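/- Let q be a prime power. The number of pairs (a, b) ∈ F_{q^2} × F_{q^2} satisfying b^q + b = a^{q+1} is exactly q^3. -/

import Mathlib

/-!
The map `T b = b ^ q + b` is additive. Its kernel consists of roots of `X ^ q + X`, and its image
lies in the fixed points of `x ↦ x ^ q`, the roots of `X ^ q - X`; both sets have at most `q`
elements while `|ker T| * |im T| = q ^ 2`, so both have exactly `q`. Hence every fixed point `c`
of `x ↦ x ^ q` has exactly `q` preimages under `T`, and `c = a ^ (q + 1)` is such a fixed point
because `a ^ (q ^ 2) = a`.
-/

open Polynomial

theorem ncard_setOf_pow_eq_mul_le {R : Type*} [CommRing R] [IsDomain R] {q : ℕ} (hq : 1 < q)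
    (c : R) : {x : R | x ^ q = c * x}.ncard ≤ q := by
  classical
  set P : R[X] := X ^ q - C c * X
  have hdeg : P.natDegree = q := by
    rw [natDegree_sub_eq_left_of_natDegree_lt, natDegree_X_pow]
    exact (natDegree_C_mul_le c X).trans_lt (by simpa using hq)
  have hP : P ≠ 0 := ne_zero_of_natDegree_gt (hdeg ▸ hq)
  have hroots : {x : R | x ^ q = c * x} ⊆ P.roots.toFinset := fun x hx => by
    simpa [P, hP, sub_eq_zero] using hx
  calc {x : R | x ^ q = c * x}.ncard ≤ (P.roots.toFinset : Set R).ncard :=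
        Set.ncard_le_ncard hroots (Finset.finite_toSet _)
    _ ≤ P.natDegree :=
        (Set.ncard_coe_finset _).trans_le (P.roots.toFinset_card_le.trans P.card_roots')
    _ = q := hdeg

theorem ncard_setOf_pow_eq_self_le {R : Type*} [CommRing R] [IsDomain R] {q : ℕ} (hq : 1 < q) :
    {x : R | x ^ q = x}.ncard ≤ q := by
  simpa using ncard_setOf_pow_eq_mul_le hq (1 : R)

theorem AddMonoidHom.card_fiber_eq_card_ker {G H : Type*} [AddGroup G] [AddGroup H] (f : G →+ H)
    {c : H} (hc : c ∈ f.range) : Nat.card {g // f g = c} = Nat.card f.ker := by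
  obtain ⟨g, rfl⟩ := hc
  exact Nat.card_congr (f.fiberEquivKer g)

section CardSq

variable {K : Type*} [Field K] [Fintype K] {q : ℕ} (hK : Fintype.card K = q ^ 2)
include hK

theorem one_lt_of_card_eq_sq : 1 < q := by
  by_contra! h
  exact (hK ▸ Fintype.one_lt_card (α := K)).not_ge (pow_le_one₀ (Nat.zero_le _) h)

theorem pow_pow_of_card_eq_sq (x : K) : (x ^ q) ^ q = x := by
  rw [← pow_mul, ← sq, ← hK, FiniteField.pow_card]

end CardSq

-- the trace of `K` over its subfield `𝔽_q`, `q = p ^ n`, when `K` has `q ^ 2` elements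
noncomputable def frobeniusTrace (K : Type*) [Field K] (p n : ℕ) [ExpChar K p] : K →+ K :=
  (iterateFrobenius K p n : K →+ K) + AddMonoidHom.id K

section FrobeniusTrace

variable {K : Type*} [Field K] {p n : ℕ} [ExpChar K p]

@[simp]
theorem frobeniusTrace_apply (x : K) : frobeniusTrace K p n x = x ^ p ^ n + x := rfl

variable [Fintype K]

theorem card_ker_frobeniusTrace_le (hq : 1 < p ^ n) :
    Nat.card (frobeniusTrace K p n).ker ≤ p ^ n := by
  rw [← SetLike.coe_sort_coe, Nat.card_coe_set_eq]
  refine (Set.ncard_le_ncard (fun x hx => ?_) (Set.toFinite _)).trans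
    (ncard_setOf_pow_eq_mul_le hq (-1 : K))
  simpa [eq_neg_iff_add_eq_zero] using hx

variable (hK : Fintype.card K = (p ^ n) ^ 2)
include hK

theorem range_frobeniusTrace_subset :
    ((frobeniusTrace K p n).range : Set K) ⊆ {x | x ^ p ^ n = x} := by
  rintro _ ⟨x, rfl⟩
  simp only [frobeniusTrace_apply, Set.mem_ofPred_eq, add_pow_expChar_pow,
    pow_pow_of_card_eq_sq hK x, add_comm]

theorem card_ker_frobeniusTrace_and_card_range :
    Nat.card (frobeniusTrace K p n).ker = p ^ n ∧
      Nat.card (frobeniusTrace K p n).range = p ^ n := by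
  have hq := one_lt_of_card_eq_sq hK
  have hker := card_ker_frobeniusTrace_le hq (K := K)
  have hrange : Nat.card (frobeniusTrace K p n).range ≤ p ^ n := by
    rw [← SetLike.coe_sort_coe, Nat.card_coe_set_eq]
    exact (Set.ncard_le_ncard (range_frobeniusTrace_subset hK) (Set.toFinite _)).trans
      (ncard_setOf_pow_eq_self_le hq)
  have hmul : Nat.card (frobeniusTrace K p n).ker * Nat.card (frobeniusTrace K p n).range
      = (p ^ n) ^ 2 := by
    rw [← AddSubgroup.index_ker, AddSubgroup.card_mul_index, Nat.card_eq_fintype_card, hK]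
  constructor <;> nlinarith

theorem range_frobeniusTrace :
    ((frobeniusTrace K p n).range : Set K) = {x | x ^ p ^ n = x} := by
  refine Set.eq_of_subset_of_ncard_le (range_frobeniusTrace_subset hK) ?_ (Set.toFinite _)
  calc {x : K | x ^ p ^ n = x}.ncard ≤ p ^ n :=
        ncard_setOf_pow_eq_self_le (one_lt_of_card_eq_sq hK)
    _ = Nat.card (frobeniusTrace K p n).range :=
        (card_ker_frobeniusTrace_and_card_range hK).2.symm
    _ = _ := Nat.card_coe_set_eq _

theorem card_frobeniusTrace_fiber {c : K} (hc : c ^ p ^ n = c) :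
    Nat.card {b : K // b ^ p ^ n + b = c} = p ^ n := by
  have hmem : c ∈ (frobeniusTrace K p n).range := by
    rw [← SetLike.mem_coe, range_frobeniusTrace hK]
    exact hc
  exact (AddMonoidHom.card_fiber_eq_card_ker _ hmem).trans
    (card_ker_frobeniusTrace_and_card_range hK).1

end FrobeniusTrace

theorem stmt5_general (p n q : ℕ) (hp : p.Prime) (hq : q = p ^ n)
    (F : Type) [Field F] [Fintype F] (hF : Fintype.card F = q ^ 2) :
    Nat.card {ab : F × F // ab.2 ^ q + ab.2 = ab.1 ^ (q + 1)} = q ^ 3 := by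
  subst hq
  have := Fact.mk hp
  have : CharP F p := charP_of_card_eq_prime_pow (hF.trans (pow_mul p n 2).symm)
  have hnorm (a : F) : (a ^ (p ^ n + 1)) ^ p ^ n = a ^ (p ^ n + 1) := by
    rw [pow_succ, mul_pow, pow_pow_of_card_eq_sq hF, mul_comm]
  calc Nat.card {ab : F × F // ab.2 ^ p ^ n + ab.2 = ab.1 ^ (p ^ n + 1)}
      = ∑ a : F, Nat.card {b : F // b ^ p ^ n + b = a ^ (p ^ n + 1)} := by
        rw [← Nat.card_sigma]
        exact Nat.card_congr <|
          Equiv.subtypeProdEquivSigmaSubtype fun a b : F => b ^ p ^ n + b = a ^ (p ^ n + 1)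
    _ = ∑ _a : F, p ^ n :=
        Finset.sum_congr rfl fun a _ => card_frobeniusTrace_fiber hF (hnorm a)
    _ = (p ^ n) ^ 3 := by
        rw [Finset.sum_const, Finset.card_univ, hF, smul_eq_mul]
        ring

/-- The Hermitian curve `b^q + b = a^{q+1}` has exactly `q³` affine points over `F_{q²}`. -/
theorem stmt5 (p n q : ℕ) (hp : p.Prime) (hn : 0 < n) (hq : q = p ^ n)
    (F : Type) [Field F] [Fintype F] (hF : Fintype.card F = q ^ 2) :
    Nat.card {ab : F × F // ab.2 ^ q + ab.2 = ab.1 ^ (q + 1)} = q ^ 3 :=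
  stmt5_general p n q hp hq F hF
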